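/- arXiv:2510.04030 — 3 statements merged into one kernel-verified Lean document; each statement's English description precedes it below -/
import Mathlib

section
/- Let μ be a Borel probability measure on ℝ and let f, g : ℝ → ℝ be monotone nondecreasing μ-integrable functions with fg integrable. Then ∫ f·g dμ ≥ (∫ f dμ)·(∫ g dμ) (the Harris/Chebyshev correlation inequality). -/
/-!
Integrate the pointwise inequality `0 ≤ (f x - f y) * (g x - g y)`, valid because `f` and `g`
vary in the same direction, against `μ ⊗ μ`: expanding the product, the two diagonal terms each
contribute `∫ f * g` and the two mixed terms each contribute `(∫ f) * (∫ g)`.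
-/

open MeasureTheory

section
variable {α : Type*} [MeasurableSpace α] {μ : Measure α} [IsProbabilityMeasure μ] {f g : α → ℝ}

theorem integral_prod_sub_mul_sub (hfi : Integrable f μ) (hgi : Integrable g μ)
    (hfgi : Integrable (fun x => f x * g x) μ) :
    ∫ z, (f z.1 - f z.2) * (g z.1 - g z.2) ∂μ.prod μ
      = 2 * (∫ x, f x * g x ∂μ - (∫ x, f x ∂μ) * ∫ x, g x ∂μ) := by
  have hexpand : (fun z : α × α => (f z.1 - f z.2) * (g z.1 - g z.2))
      = fun z => f z.1 * g z.1 - f z.1 * g z.2 - g z.1 * f z.2 + f z.2 * g z.2 := by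
    ext z; ring
  have h₁ := hfgi.comp_fst μ
  have h₂ := hfi.mul_prod hgi
  have h₃ := hgi.mul_prod hfi
  have h₄ := hfgi.comp_snd μ
  have h₁₂ : Integrable (fun z : α × α => f z.1 * g z.1 - f z.1 * g z.2) (μ.prod μ) :=
    h₁.sub h₂
  have h₁₂₃ : Integrable
      (fun z : α × α => f z.1 * g z.1 - f z.1 * g z.2 - g z.1 * f z.2) (μ.prod μ) :=
    h₁₂.sub h₃
  rw [hexpand, integral_add h₁₂₃ h₄, integral_sub h₁₂ h₃, integral_sub h₁ h₂,
    integral_fun_fst (fun x => f x * g x), integral_fun_snd (fun x => f x * g x),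
    integral_prod_mul f g, integral_prod_mul g f]
  simp only [probReal_univ, one_smul]
  ring

theorem Monovary.integral_mul_integral_le (hfg : Monovary f g) (hfi : Integrable f μ)
    (hgi : Integrable g μ) (hfgi : Integrable (fun x => f x * g x) μ) :
    (∫ x, f x ∂μ) * ∫ x, g x ∂μ ≤ ∫ x, f x * g x ∂μ := by
  have hnonneg : 0 ≤ ∫ z, (f z.1 - f z.2) * (g z.1 - g z.2) ∂μ.prod μ :=
    integral_nonneg fun z => hfg.sub_mul_sub_nonneg z.2 z.1
  rw [integral_prod_sub_mul_sub hfi hgi hfgi] at hnonneg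
  linarith

end

/-- Harris/Chebyshev correlation inequality: for a probability measure `μ` on `ℝ` and
nondecreasing integrable functions `f, g` with integrable product,
`∫ f·g dμ ≥ (∫ f dμ)·(∫ g dμ)`. -/
theorem stmt2 (μ : Measure ℝ) [IsProbabilityMeasure μ] (f g : ℝ → ℝ)
    (hf : Monotone f) (hg : Monotone g)
    (hfi : Integrable f μ) (hgi : Integrable g μ)
    (hfgi : Integrable (fun x => f x * g x) μ) :
    (∫ x, f x * g x ∂μ) ≥ (∫ x, f x ∂μ) * ∫ x, g x ∂μ :=
  (hf.monovary hg).integral_mul_integral_le hfi hgi hfgi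
end

section
/- Let ν be a probability measure on a measurable space, g a nonnegative measurable function with e^{−λg} ν-integrable for all λ ≥ 0 and g^{q+1} ν-integrable for some q > 0. Define γ^{(λ)} by dγ^{(λ)}/dν = e^{−λg}/ν(e^{−λg}). Then λ ↦ γ^{(λ)}(g^q) := ∫ g^q dγ^{(λ)} is nonincreasing on [0,∞); in particular γ^{(λ)}(g^q) ≤ ∫ g^q dν for all λ ≥ 0. -/
open MeasureTheory Real

/-- Chebyshev / Harris correlation inequality for oppositely ordered functions,
with a nonnegative weight. -/
lemma cheb_aux {X : Type*} [MeasurableSpace X] (ν : Measure X) [IsProbabilityMeasure ν]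
    (F H w : X → ℝ) (hw : ∀ x, 0 ≤ w x)
    (h1 : Integrable (fun x => F x * H x * w x) ν)
    (h2 : Integrable (fun x => F x * w x) ν)
    (h3 : Integrable (fun x => H x * w x) ν)
    (h4 : Integrable w ν)
    (hop : ∀ x y, (F x - F y) * (H x - H y) ≤ 0) :
    (∫ x, F x * H x * w x ∂ν) * (∫ x, w x ∂ν)
      ≤ (∫ x, F x * w x ∂ν) * (∫ x, H x * w x ∂ν) := by
  have hA : Integrable (fun p : X × X => (F p.1 * H p.1 * w p.1) * w p.2) (ν.prod ν) :=
    h1.mul_prod h4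
  have hA' : Integrable (fun p : X × X => w p.1 * (F p.2 * H p.2 * w p.2)) (ν.prod ν) :=
    h4.mul_prod h1
  have hB : Integrable (fun p : X × X => (F p.1 * w p.1) * (H p.2 * w p.2)) (ν.prod ν) :=
    h2.mul_prod h3
  have hB' : Integrable (fun p : X × X => (H p.1 * w p.1) * (F p.2 * w p.2)) (ν.prod ν) :=
    h3.mul_prod h2
  have key : ∫ p : X × X, ((F p.1 * H p.1 * w p.1) * w p.2 + w p.1 * (F p.2 * H p.2 * w p.2)) ∂(ν.prod ν)
      ≤ ∫ p : X × X, ((F p.1 * w p.1) * (H p.2 * w p.2) + (H p.1 * w p.1) * (F p.2 * w p.2)) ∂(ν.prod ν) := by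
    refine integral_mono (hA.add hA') (hB.add hB') ?_
    intro p
    dsimp only
    have h0 := hop p.1 p.2
    have hww : 0 ≤ w p.1 * w p.2 := mul_nonneg (hw _) (hw _)
    nlinarith [mul_nonneg (neg_nonneg.mpr h0) hww]
  rw [integral_add hA hA', integral_add hB hB',
    integral_prod_mul (fun x => F x * H x * w x) w,
    integral_prod_mul w (fun x => F x * H x * w x),
    integral_prod_mul (fun x => F x * w x) (fun x => H x * w x),
    integral_prod_mul (fun x => H x * w x) (fun x => F x * w x)] at key
  nlinarith [key]

/-- For the exponentially tilted measure `γ^{(λ)}` with density `e^{-λg}/ν(e^{-λg})`,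
the map `λ ↦ γ^{(λ)}(g^q)` is nonincreasing on `[0,∞)`; in particular it is bounded
by its value at `λ = 0`, namely `∫ g^q dν`. -/
theorem stmt3 {X : Type*} [MeasurableSpace X] (ν : Measure X) [IsProbabilityMeasure ν]
    (g : X → ℝ) (hg : Measurable g) (hg0 : ∀ x, 0 ≤ g x) (q : ℝ) (hq : 0 < q)
    (hexp : ∀ l : ℝ, 0 ≤ l → Integrable (fun x => exp (-l * g x)) ν)
    (hmom : Integrable (fun x => g x ^ (q + 1)) ν) :
    AntitoneOn
      (fun l : ℝ => (∫ x, g x ^ q * exp (-l * g x) ∂ν) / ∫ x, exp (-l * g x) ∂ν)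
      (Set.Ici 0) ∧
    ∀ l : ℝ, 0 ≤ l →
      (∫ x, g x ^ q * exp (-l * g x) ∂ν) / (∫ x, exp (-l * g x) ∂ν)
        ≤ ∫ x, g x ^ q ∂ν := by
  -- integrability of g^q * exp(-l g) for l ≥ 0
  have hgq_meas : Measurable fun x => g x ^ q := (Real.continuous_rpow_const hq.le).measurable.comp hg
  have hbound : ∀ x, ∀ l : ℝ, 0 ≤ l → |g x ^ q * exp (-l * g x)| ≤ 1 + g x ^ (q + 1) := by
    intro x l hl
    have hgx := hg0 x
    have hexple : exp (-l * g x) ≤ 1 := by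
      rw [exp_le_one_iff]
      nlinarith
    have h1 : |g x ^ q * exp (-l * g x)| = g x ^ q * exp (-l * g x) := by
      rw [abs_of_nonneg (mul_nonneg (rpow_nonneg hgx q) (exp_pos _).le)]
    rw [h1]
    have h2 : g x ^ q * exp (-l * g x) ≤ g x ^ q := by
      nlinarith [rpow_nonneg hgx q, (exp_pos (-l * g x)).le]
    refine h2.trans ?_
    rcases le_total (g x) 1 with hle | hle
    · have : g x ^ q ≤ 1 := rpow_le_one hgx hle hq.le
      nlinarith [rpow_nonneg hgx (q + 1)]
    · have : g x ^ q ≤ g x ^ (q + 1) := rpow_le_rpow_of_exponent_le hle (by linarith)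
      linarith
  have hint : ∀ l : ℝ, 0 ≤ l → Integrable (fun x => g x ^ q * exp (-l * g x)) ν := by
    intro l hl
    refine Integrable.mono' ((integrable_const 1).add hmom)
      (hgq_meas.mul ((hg.const_mul (-l)).exp)).aestronglyMeasurable
      (Filter.Eventually.of_forall fun x => hbound x l hl)
  -- positivity of denominators
  have hpos : ∀ l : ℝ, 0 ≤ l → 0 < ∫ x, exp (-l * g x) ∂ν := by
    intro l hl
    rw [integral_pos_iff_support_of_nonneg (fun x => (exp_pos _).le) (hexp l hl)]
    have : (Function.support fun x => exp (-l * g x)) = Set.univ := by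
      ext x; simp [(exp_pos (-l * g x)).ne']
    rw [this]
    simp
  -- the key antitone statement
  have hanti : AntitoneOn
      (fun l : ℝ => (∫ x, g x ^ q * exp (-l * g x) ∂ν) / ∫ x, exp (-l * g x) ∂ν)
      (Set.Ici 0) := by
    intro a ha b hb hab
    simp only [Set.mem_Ici] at ha hb
    rw [div_le_div_iff₀ (hpos b hb) (hpos a ha)]
    have hkey := cheb_aux ν (fun x => g x ^ q) (fun x => exp (-(b - a) * g x))
      (fun x => exp (-a * g x)) (fun x => (exp_pos _).le)
      ?_ (hint a ha) ?_ (hexp a ha) ?_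
    · have e1 : ∀ x, g x ^ q * exp (-(b - a) * g x) * exp (-a * g x)
          = g x ^ q * exp (-b * g x) := by
        intro x
        rw [mul_assoc, ← exp_add]
        ring_nf
      have e2 : ∀ x, exp (-(b - a) * g x) * exp (-a * g x) = exp (-b * g x) := by
        intro x
        rw [← exp_add]
        ring_nf
      calc (∫ x, g x ^ q * exp (-b * g x) ∂ν) * ∫ x, exp (-a * g x) ∂ν
          = (∫ x, g x ^ q * exp (-(b - a) * g x) * exp (-a * g x) ∂ν)
              * ∫ x, exp (-a * g x) ∂ν := by rw [integral_congr_ae (Filter.Eventually.of_forall e1)]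
        _ ≤ (∫ x, g x ^ q * exp (-a * g x) ∂ν)
              * ∫ x, exp (-(b - a) * g x) * exp (-a * g x) ∂ν := hkey
        _ = (∫ x, g x ^ q * exp (-a * g x) ∂ν) * ∫ x, exp (-b * g x) ∂ν := by
              rw [integral_congr_ae (Filter.Eventually.of_forall e2)]
    · -- Integrable F*H*w = g^q * exp(-b g)
      have := hint b hb
      refine this.congr (Filter.Eventually.of_forall fun x => ?_)
      dsimp only
      rw [mul_assoc, ← exp_add]
      ring_nf
    · -- Integrable H*w = exp(-b g)
      have := hexp b hb
      refine this.congr (Filter.Eventually.of_forall fun x => ?_)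
      dsimp only
      rw [← exp_add]
      ring_nf
    · -- oppositely ordered
      intro x y
      rcases le_total (g x) (g y) with hxy | hxy
      · refine mul_nonpos_of_nonpos_of_nonneg ?_ ?_
        · simpa using rpow_le_rpow (hg0 x) hxy hq.le
        · simp only [sub_nonneg, exp_le_exp]
          nlinarith
      · refine mul_nonpos_of_nonneg_of_nonpos ?_ ?_
        · simpa using rpow_le_rpow (hg0 y) hxy hq.le
        · simp only [sub_nonpos, exp_le_exp]
          nlinarith
  refine ⟨hanti, fun l hl => ?_⟩
  have h0 := hanti (Set.mem_Ici.mpr le_rfl) (Set.mem_Ici.mpr hl) hl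
  simpa using h0
end

section
/- Let f : ℝ → (0,∞) be integrable on [0,r] with r > 0, nondecreasing, and suppose f is differentiable at almost every point of (0,r). Then there exists r₀ ∈ (0,r) at which ln∘f is differentiable and (ln f(r) − ln f(0))/r ≥ (ln f)'(r₀) = f'(r₀)/f(r₀). -/
/-!
If the derivative of the monotone function `log ∘ f` exceeded its average slope `L` almost
everywhere on `(0, r)`, its integral over `[0, r]` would exceed `L * r = log f r - log f 0`;
but the integral of the a.e. derivative of a monotone function never exceeds its increment.
So `(log ∘ f)' ≤ L` on a set of positive measure, which meets the full-measure set where `f`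
is differentiable, and there `(log ∘ f)' = f' / f`.
-/

open MeasureTheory Set Filter

theorem MonotoneOn.frequently_deriv_le_slope {g : ℝ → ℝ} {a b : ℝ}
    (hg : MonotoneOn g (Icc a b)) (hab : a < b) :
    ∃ᵐ x ∂(volume.restrict (Ioo a b)), deriv g x ≤ (g b - g a) / (b - a) := by
  set s := (g b - g a) / (b - a)
  have hgab : g a ≤ g b := hg (left_mem_Icc.2 hab.le) (right_mem_Icc.2 hab.le) hab.le
  rw [← uIcc_of_le hab.le] at hg
  by_contra! hgt
  rw [Measure.restrict_congr_set Ioo_ae_eq_Ioc] at hgt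
  have : (ae (volume.restrict (Ioc a b))).NeBot := ae_neBot.2 (by simp [hab])
  have hlt : ∫ _ in a..b, s < ∫ x in a..b, deriv g x :=
    intervalIntegral.integral_lt_integral_of_ae_le_of_measure_setOfPred_lt_ne_zero hab.le
      intervalIntegrable_const hg.intervalIntegrable_deriv (hgt.mono fun _ => le_of_lt)
      (frequently_ae_iff.1 hgt.frequently)
  rw [intervalIntegral.integral_const, smul_eq_mul, mul_div_cancel₀ _ (sub_ne_zero.2 hab.ne')]
    at hlt
  have hle := (uIcc_of_le (sub_nonneg.2 hgab) ▸ hg.intervalIntegral_deriv_mem_uIcc).2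
  exact hlt.not_ge hle

/-- Mean-value-type inequality for the a.e. derivative of `ln ∘ f`: if `f` is positive,
nondecreasing on `[0,r]` and differentiable almost everywhere on `(0,r)`, then there is
`r₀ ∈ (0,r)` where `f` (hence `ln ∘ f`) is differentiable and the average slope of
`ln ∘ f` over `[0,r]` dominates `(ln f)'(r₀) = f'(r₀)/f(r₀)`. -/
theorem stmt5 (f : ℝ → ℝ) (r : ℝ) (hr : 0 < r)
    (hpos : ∀ x ∈ Icc 0 r, 0 < f x)
    (hmono : MonotoneOn f (Icc 0 r))
    (hdiff : ∀ᵐ x ∂(volume.restrict (Ioo 0 r)), DifferentiableAt ℝ f x) :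
    ∃ r₀ ∈ Ioo 0 r, DifferentiableAt ℝ f r₀ ∧
      DifferentiableAt ℝ (fun x => Real.log (f x)) r₀ ∧
      (Real.log (f r) - Real.log (f 0)) / r ≥ deriv (fun x => Real.log (f x)) r₀ ∧
      deriv (fun x => Real.log (f x)) r₀ = deriv f r₀ / f r₀ := by
  have hlog_mono : MonotoneOn (fun x => Real.log (f x)) (Icc 0 r) :=
    fun x hx y hy hxy => Real.log_le_log (hpos x hx) (hmono hx hy hxy)
  obtain ⟨r₀, hslope, hdf, hr₀⟩ := ((hlog_mono.frequently_deriv_le_slope hr).and_eventually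
    (hdiff.and (ae_restrict_mem measurableSet_Ioo))).exists
  have hlog := hdf.hasDerivAt.log (hpos r₀ (Ioo_subset_Icc_self hr₀)).ne'
  exact ⟨r₀, hr₀, hdf, hlog.differentiableAt, by simpa using hslope, hlog.deriv⟩
end
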